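/- For every classical propositional formula α whose propositional symbols are contained in {B_1,…,B_n}, Prob(α) = Σ_{v' : {1,…,n} → {0,1}, v' ⊨ α} |f(v')|². -/

import Mathlib

/-!
The vectors `a_A`, `b_A` and `w_A` are orthogonal to every `u_v`, so on the span of the `u_v`
each `Q_j` acts diagonally: it keeps `u_v` when `v(j) = 1` and kills it otherwise, while
`id − Q_j` does the opposite. Applying `T_{j_1}^v, …, T_{j_k}^v` to `ψ = Σ f(v')·u_{v'}`
therefore keeps exactly the terms with `v'` extending `v`, and `Re⟨ψ, ·⟩` of the result is
`Σ_{v' extends v} |f(v')|²`. Summing over the `v` that satisfy `α` groups the total valuations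
satisfying `α` by their restriction to `B_α`.
-/

open scoped InnerProductSpace

noncomputable section

/-- Classical propositional formulas, built from propositional symbols `B_j` (`j : ℕ`)
and `⊤` using `¬` and `→`. -/
inductive PropForm : Type
  | verum : PropForm
  | var : ℕ → PropForm
  | neg : PropForm → PropForm
  | imp : PropForm → PropForm → PropForm

namespace PropForm

/-- The (finite) set of propositional symbols occurring in a formula. -/
def symbols : PropForm → Finset ℕ
  | verum => ∅
  | var n => {n}
  | neg a => a.symbols
  | imp a b => a.symbols ∪ b.symbols

/-- Truth-table evaluation of a formula under a (total) assignment of truth values. -/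
def eval (w : ℕ → Bool) : PropForm → Bool
  | verum => true
  | var n => w n
  | neg a => !(a.eval w)
  | imp a b => !(a.eval w) || b.eval w

end PropForm

/-- A valuation `v` on a set `A` of propositional symbols (with `A ⊇ B_α`) satisfies `α`. -/
def Sat (A : Finset ℕ) (v : {k // k ∈ A} → Bool) (α : PropForm) : Prop :=
  PropForm.eval (fun k => if h : k ∈ A then v ⟨k, h⟩ else false) α = true

instance (A : Finset ℕ) (α : PropForm) : DecidablePred (fun v => Sat A v α) := fun _ => by
  unfold Sat; infer_instance

variable {H : Type*} [NormedAddCommGroup H] [InnerProductSpace ℂ H] [CompleteSpace H]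

/-- The rank-one operator `|x⟩⟨y| : z ↦ ⟨y, z⟩ • x`. -/
def ketbra (x y : H) : H →L[ℂ] H :=
  (innerSL ℂ y).smulRight x

/-- `wvec a b = (1/√2)·(a + b)`. -/
def wvec (a b : H) : H :=
  ((Real.sqrt 2 : ℂ))⁻¹ • (a + b)

/-- The projection `Q_j` associated with the propositional symbol `B_j`: a two-element
subset `{min A, max A}` in `NC` is encoded as the ordered pair `p = (min A, max A)` with
`p.1 < p.2`. -/
def Qop (n : ℕ) (NC : Finset (Fin n × Fin n)) (u : (Fin n → Bool) → H)
    (a b : Fin n × Fin n → H) (j : Fin n) : H →L[ℂ] H :=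
  (∑ v ∈ Finset.univ.filter (fun v : Fin n → Bool => v j = true), ketbra (u v) (u v)) +
    ∑ p ∈ NC,
      (if j = p.1 then ketbra (wvec (a p) (b p)) (wvec (a p) (b p))
       else if j = p.2 then ketbra (b p) (b p)
       else ketbra (a p) (a p) + ketbra (b p) (b p))

/-- The family consisting of the vectors `u_v` together with `a_A, b_A` for `A ∈ NC`. -/
def fam (n : ℕ) (NC : Finset (Fin n × Fin n)) (u : (Fin n → Bool) → H)
    (a b : Fin n × Fin n → H) : ((Fin n → Bool) ⊕ ({p // p ∈ NC} × Bool)) → H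
  | .inl v => u v
  | .inr (p, d) => if d then b p.1 else a p.1

/-- The probability of the classical formula `α` in the state `ψ = Σ_v f(v)·u_v`:
the sum, over valuations `v` on `B_α` satisfying `α`, of
`Re ⟪ψ, T_{j_k}^v(⋯ (T_{j_1}^v ψ) ⋯)⟫` where `B_α = {j_1 < … < j_k}` and
`T_j^v = Q_j` when `v(j) = 1` and `T_j^v = id − Q_j` otherwise. -/
def ProbQ (n : ℕ) (NC : Finset (Fin n × Fin n)) (u : (Fin n → Bool) → H)
    (a b : Fin n × Fin n → H) (f : (Fin n → Bool) → ℂ) (α : PropForm) : ℝ :=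
  let ψ : H := ∑ v : Fin n → Bool, f v • u v
  ∑ v ∈ Finset.univ.filter (fun v : {k // k ∈ α.symbols} → Bool => Sat α.symbols v α),
    (⟪ψ, (α.symbols.sort (· ≤ ·)).foldl
        (fun x s => if hs : s ∈ α.symbols then
            if hsn : s < n then
              (if v ⟨s, hs⟩ then Qop n NC u a b ⟨s, hsn⟩ x
               else x - Qop n NC u a b ⟨s, hsn⟩ x)
            else x
          else x) ψ⟫_ℂ).re

open Finset

theorem PropForm.eval_congr (α : PropForm) {w w' : ℕ → Bool}
    (h : ∀ s ∈ α.symbols, w s = w' s) : α.eval w = α.eval w' := by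
  induction α with
  | verum => rfl
  | var k => exact h k (Finset.mem_singleton_self k)
  | neg a ih => simp only [eval, ih h]
  | imp a b iha ihb =>
    simp only [symbols, Finset.mem_union] at h
    simp only [eval, iha fun s hs => h s (.inl hs), ihb fun s hs => h s (.inr hs)]

theorem List.foldl_eq_filter {ι α M : Type*} (φ : Finset ι → M) (step : M → α → M)
    (P : α → ι → Prop) [∀ s, DecidablePred (P s)] (l : List α)
    (hstep : ∀ s ∈ l, ∀ S, step (φ S) s = φ (S.filter (P s))) (S : Finset ι) :
    l.foldl step (φ S) = φ (S.filter fun i => ∀ s ∈ l, P s i) := by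
  induction l generalizing S with
  | nil => simp
  | cons s t ih =>
    rw [List.foldl_cons, hstep s List.mem_cons_self,
      ih (fun s' hs' => hstep s' (List.mem_cons_of_mem s hs')), Finset.filter_filter]
    simp only [List.forall_mem_cons]

section DiagonalAction

variable {R M F ι : Type*} [Ring R] [AddCommGroup M] [Module R M] [FunLike F M M]
  [LinearMapClass F R M M] (T : F) (e : ι → M) (p : ι → Prop) [DecidablePred p]

theorem map_sum_smul_of_apply_eq_ite (he : ∀ i, T (e i) = if p i then e i else 0)
    (c : ι → R) (S : Finset ι) :
    T (∑ i ∈ S, c i • e i) = ∑ i ∈ S.filter p, c i • e i := by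
  rw [map_sum, sum_filter]
  refine sum_congr rfl fun i _ => ?_
  rw [map_smul, he]
  split_ifs <;> simp

theorem sub_map_sum_smul_of_apply_eq_ite (he : ∀ i, T (e i) = if p i then e i else 0)
    (c : ι → R) (S : Finset ι) :
    ∑ i ∈ S, c i • e i - T (∑ i ∈ S, c i • e i) = ∑ i ∈ S.filter (¬ p ·), c i • e i := by
  rw [map_sum_smul_of_apply_eq_ite T e p he, sub_eq_iff_eq_add',
    sum_filter_add_sum_filter_not]

end DiagonalAction

section ClassicalBasis

omit [CompleteSpace H]

theorem ketbra_apply_eq_zero {x y z : H} (h : ⟪y, z⟫_ℂ = 0) : ketbra x y z = 0 := by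
  simp [ketbra, h]

variable {n : ℕ} {NC : Finset (Fin n × Fin n)} {u : (Fin n → Bool) → H}
  {a b : Fin n × Fin n → H}

theorem orthonormal_u (hon : Orthonormal ℂ (fam n NC u a b)) : Orthonormal ℂ u :=
  hon.comp Sum.inl Sum.inl_injective

theorem Qop_apply_u (hon : Orthonormal ℂ (fam n NC u a b)) (j : Fin n) (w : Fin n → Bool) :
    Qop n NC u a b j (u w) = if w j = true then u w else 0 := by
  have ha : ∀ p ∈ NC, ⟪a p, u w⟫_ℂ = 0 := fun p hp =>
    hon.2 (i := .inr (⟨p, hp⟩, false)) (j := .inl w) Sum.inr_ne_inl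
  have hb : ∀ p ∈ NC, ⟪b p, u w⟫_ℂ = 0 := fun p hp =>
    hon.2 (i := .inr (⟨p, hp⟩, true)) (j := .inl w) Sum.inr_ne_inl
  have hNC : ∀ p ∈ NC, (if j = p.1 then ketbra (wvec (a p) (b p)) (wvec (a p) (b p))
      else if j = p.2 then ketbra (b p) (b p)
      else ketbra (a p) (a p) + ketbra (b p) (b p)) (u w) = 0 := by
    intro p hp
    have hw : ⟪wvec (a p) (b p), u w⟫_ℂ = 0 := by
      simp [wvec, ha p hp, hb p hp]
    split_ifs
    · exact ketbra_apply_eq_zero hw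
    · exact ketbra_apply_eq_zero (hb p hp)
    · simp [ketbra_apply_eq_zero (ha p hp), ketbra_apply_eq_zero (hb p hp)]
  have hu : ∀ v, ketbra (u v) (u v) (u w) = if v = w then u w else 0 := by
    intro v
    simp only [ketbra, ContinuousLinearMap.smulRight_apply, innerSL_apply_apply,
      orthonormal_iff_ite.mp (orthonormal_u hon)]
    split_ifs with h <;> simp [h]
  simp only [Qop, _root_.add_apply, _root_.sum_apply,
    sum_eq_zero hNC, add_zero, hu, sum_ite_eq', mem_filter, mem_univ, true_and]

def restrictSymbols {A : Finset ℕ} (hA : ∀ s ∈ A, s < n) (v : Fin n → Bool) :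
    {k // k ∈ A} → Bool :=
  fun k => v ⟨k, hA k k.2⟩

theorem sat_restrictSymbols_iff {α : PropForm} (hsym : ∀ s ∈ α.symbols, s < n)
    (v : Fin n → Bool) :
    Sat α.symbols (restrictSymbols hsym v) α ↔
      α.eval (fun k => if h : k < n then v ⟨k, h⟩ else false) = true := by
  rw [Sat, α.eval_congr fun s hs => ?_]
  simp only [dif_pos hs, dif_pos (hsym s hs), restrictSymbols]

theorem sum_filter_eval_eq_sum_sat_sum_restrictSymbols {M : Type*} [AddCommMonoid M]
    {α : PropForm} (hsym : ∀ s ∈ α.symbols, s < n) (g : (Fin n → Bool) → M) :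
    ∑ v ∈ univ.filter (fun v : Fin n → Bool =>
        α.eval (fun k => if h : k < n then v ⟨k, h⟩ else false) = true), g v
      = ∑ vp ∈ univ.filter (fun vp => Sat α.symbols vp α),
          ∑ v ∈ univ.filter (fun v => restrictSymbols hsym v = vp), g v := by
  rw [← sum_fiberwise_of_maps_to (g := restrictSymbols hsym)
    (t := univ.filter fun vp => Sat α.symbols vp α) fun v hv => by
      simpa [sat_restrictSymbols_iff] using hv]
  refine sum_congr rfl fun vp hvp => ?_
  rw [filter_filter]
  refine sum_congr (filter_congr fun v _ => ?_) fun _ _ => rfl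
  simp only [mem_filter, mem_univ, true_and] at hvp
  constructor
  · exact And.right
  · rintro rfl
    exact ⟨(sat_restrictSymbols_iff hsym v).mp hvp, rfl⟩

variable (f : (Fin n → Bool) → ℂ)

theorem foldl_Qop_sum_smul (hon : Orthonormal ℂ (fam n NC u a b)) {α : PropForm}
    (hsym : ∀ s ∈ α.symbols, s < n) (vp : {k // k ∈ α.symbols} → Bool) :
    (α.symbols.sort (· ≤ ·)).foldl
        (fun x s => if hs : s ∈ α.symbols then
            if hsn : s < n then
              (if vp ⟨s, hs⟩ then Qop n NC u a b ⟨s, hsn⟩ x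
               else x - Qop n NC u a b ⟨s, hsn⟩ x)
            else x
          else x) (∑ v : Fin n → Bool, f v • u v)
      = ∑ v ∈ univ.filter (fun v => restrictSymbols hsym v = vp), f v • u v := by
  classical
  rw [← (univ : Finset (Fin n → Bool)).filter_true_of_mem (fun _ _ => trivial),
    List.foldl_eq_filter (fun S => ∑ v ∈ S, f v • u v) _
      (fun s v => ∀ hs : s ∈ α.symbols, v ⟨s, hsym s hs⟩ = vp ⟨s, hs⟩)]
  · simp only [filter_filter, true_and, Finset.mem_sort, funext_iff, Subtype.forall,
      restrictSymbols]
    exact sum_congr (filter_congr fun v _ => ⟨fun h s hs => h s hs hs, fun h s _ => h s⟩)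
      fun _ _ => rfl
  intro s hs' S
  have hs := (Finset.mem_sort _).mp hs'
  have hQ := Qop_apply_u hon ⟨s, hsym s hs⟩
  simp only [dif_pos hs, dif_pos (hsym s hs)]
  split_ifs with hv
  · rw [map_sum_smul_of_apply_eq_ite _ u _ hQ]
    refine sum_congr (filter_congr fun v _ => ?_) fun _ _ => rfl
    simp [hs, hv]
  · rw [sub_map_sum_smul_of_apply_eq_ite _ u _ hQ]
    refine sum_congr (filter_congr fun v _ => ?_) fun _ _ => rfl
    simp [hs, hv]

theorem re_inner_sum_smul_sum_smul (hon : Orthonormal ℂ (fam n NC u a b))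
    (S : Finset (Fin n → Bool)) :
    (⟪∑ w, f w • u w, ∑ v ∈ S, f v • u v⟫_ℂ).re = ∑ v ∈ S, ‖f v‖ ^ 2 := by
  simp only [inner_sum, inner_smul_right, (orthonormal_u hon).inner_left_fintype,
    Complex.mul_conj', Complex.re_sum]
  norm_cast

end ClassicalBasis

theorem stmt11_general (n : ℕ) (NC : Finset (Fin n × Fin n))
    (u : (Fin n → Bool) → H) (a b : Fin n × Fin n → H)
    (hon : Orthonormal ℂ (fam n NC u a b))
    (f : (Fin n → Bool) → ℂ)
    (α : PropForm) (hsym : ∀ s ∈ α.symbols, s < n) :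
    ProbQ n NC u a b f α =
      ∑ v' ∈ Finset.univ.filter (fun v' : Fin n → Bool =>
          PropForm.eval (fun k => if h : k < n then v' ⟨k, h⟩ else false) α = true),
        ‖f v'‖ ^ 2 := by
  rw [sum_filter_eval_eq_sum_sat_sum_restrictSymbols hsym]
  exact sum_congr rfl fun vp _ => by
    rw [foldl_Qop_sum_smul f hon hsym, re_inner_sum_smul_sum_smul f hon]

/-- For a formula `α` with symbols among `B_1, …, B_n`,
`Prob(α) = Σ_{v' : {1,…,n} → {0,1}, v' ⊨ α} |f(v')|²`. -/
theorem stmt11 (n : ℕ) (hn : 1 ≤ n) (NC : Finset (Fin n × Fin n))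
    (hNC : ∀ p ∈ NC, p.1 < p.2)
    (u : (Fin n → Bool) → H) (a b : Fin n × Fin n → H)
    (hon : Orthonormal ℂ (fam n NC u a b))
    (htot : (Submodule.span ℂ (Set.range (fam n NC u a b))).topologicalClosure = ⊤)
    (f : (Fin n → Bool) → ℂ) (hf : ∑ v : Fin n → Bool, ‖f v‖ ^ 2 = 1)
    (α : PropForm) (hsym : ∀ s ∈ α.symbols, s < n) :
    ProbQ n NC u a b f α =
      ∑ v' ∈ Finset.univ.filter (fun v' : Fin n → Bool =>
          PropForm.eval (fun k => if h : k < n then v' ⟨k, h⟩ else false) α = true),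
        ‖f v'‖ ^ 2 :=
  stmt11_general n NC u a b hon f α hsym

end
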